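/- Let μ ∈ ℝ, σ > 0 and t > 0, and let p(t, x) = (2π(1−e^{−t}))^{−1/2} (2πσ²)^{−1/2} ∫_ℝ exp(−(x − x₀ e^{−t/2})²/(2(1−e^{−t}))) exp(−(x₀ − μ)²/(2σ²)) dx₀. Then for all x ∈ ℝ, the derivative of log p in x satisfies ∂_x log p(t, x) = (−x + μ e^{−t/2})/(σ² e^{−t} + 1 − e^{−t}); in particular, for each fixed x this quantity stays bounded as t → 0⁺ and converges to (−x + μ)/σ². -/

import Mathlib

open MeasureTheory Real Filter Topology

noncomputable section

/-- The marginal density at time `t` of the OU process started from `N(μ, σ²)`. -/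
def pOU (μ σ t x : ℝ) : ℝ :=
  (2 * π * (1 - Real.exp (-t))) ^ (-(1:ℝ)/2) * (2 * π * σ ^ 2) ^ (-(1:ℝ)/2) *
    ∫ x₀ : ℝ, Real.exp (-(x - x₀ * Real.exp (-t / 2)) ^ 2 / (2 * (1 - Real.exp (-t)))) *
      Real.exp (-(x₀ - μ) ^ 2 / (2 * σ ^ 2))

/-- Closed form for the OU marginal: a Gaussian with mean `μ e^{-t/2}` and
variance `σ² e^{-t} + 1 - e^{-t}`. -/
lemma pOU_closed (μ σ : ℝ) (hσ : 0 < σ) (t : ℝ) (ht : 0 < t) :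
    ∃ C : ℝ, 0 < C ∧ ∀ x : ℝ, pOU μ σ t x =
      C * Real.exp (-(x - Real.exp (-t/2) * μ)^2 /
        (2 * (σ^2 * Real.exp (-t) + 1 - Real.exp (-t)))) := by
  set a := Real.exp (-t/2) with ha
  have ha2 : Real.exp (-t) = a ^ 2 := by
    rw [ha, ← Real.exp_nat_mul]; ring_nf
  have hapos : 0 < a := Real.exp_pos _
  have hb : 0 < 1 - Real.exp (-t) := by
    have : Real.exp (-t) < 1 := Real.exp_lt_one_iff.2 (by linarith)
    linarith
  set b := 1 - Real.exp (-t) with hbdef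
  set v := σ^2 * Real.exp (-t) + 1 - Real.exp (-t) with hvdef
  have hv : 0 < v := by
    have : 0 < σ^2 * Real.exp (-t) := by positivity
    simp only [hvdef]; linarith
  set q := v / (2 * b * σ^2) with hq
  have hqpos : 0 < q := by positivity
  refine ⟨(2 * π * b) ^ (-(1:ℝ)/2) * (2 * π * σ ^ 2) ^ (-(1:ℝ)/2) * Real.sqrt (π / q),
    by positivity, fun x => ?_⟩
  have key : ∀ x₀ : ℝ,
      Real.exp (-(x - x₀ * a) ^ 2 / (2 * b)) * Real.exp (-(x₀ - μ) ^ 2 / (2 * σ ^ 2))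
      = Real.exp (-(x - a * μ)^2 / (2 * v)) *
        Real.exp (-q * (x₀ - (a * x * σ^2 + μ * b) / v)^2) := by
    intro x₀
    rw [← Real.exp_add, ← Real.exp_add]
    congr 1
    have hv2 : v = σ^2 * a^2 + b := by simp only [hvdef, hbdef, ha2]; ring
    rw [hq, hv2]
    field_simp
    ring
  have : (∫ x₀ : ℝ, Real.exp (-(x - x₀ * a) ^ 2 / (2 * b)) *
      Real.exp (-(x₀ - μ) ^ 2 / (2 * σ ^ 2)))
      = Real.exp (-(x - a * μ)^2 / (2 * v)) * Real.sqrt (π / q) := by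
    simp_rw [key]
    rw [MeasureTheory.integral_const_mul]
    congr 1
    rw [← integral_gaussian q]
    exact MeasureTheory.integral_sub_right_eq_self (fun y => Real.exp (-q * y^2)) _
  rw [pOU]
  rw [this]
  ring

/-- For the OU marginal started from `N(μ, σ²)`,
`∂ₓ log p(t,x) = (-x + μ e^{-t/2})/(σ² e^{-t} + 1 - e^{-t})`, which for fixed `x`
remains bounded as `t → 0⁺` and converges to `(-x + μ)/σ²`. -/
theorem deriv_log_pOU (μ σ : ℝ) (hσ : 0 < σ) :
    (∀ t : ℝ, 0 < t → ∀ x : ℝ,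
      deriv (fun x' => Real.log (pOU μ σ t x')) x =
        (-x + μ * Real.exp (-t / 2)) / (σ ^ 2 * Real.exp (-t) + 1 - Real.exp (-t))) ∧
    ∀ x : ℝ,
      Tendsto (fun t => deriv (fun x' => Real.log (pOU μ σ t x')) x)
        (𝓝[>] (0 : ℝ)) (𝓝 ((-x + μ) / σ ^ 2)) := by
  have main : ∀ t : ℝ, 0 < t → ∀ x : ℝ,
      deriv (fun x' => Real.log (pOU μ σ t x')) x =
        (-x + μ * Real.exp (-t / 2)) / (σ ^ 2 * Real.exp (-t) + 1 - Real.exp (-t)) := by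
    intro t ht x
    obtain ⟨C, hC, hcl⟩ := pOU_closed μ σ hσ t ht
    set a := Real.exp (-t/2)
    set v := σ^2 * Real.exp (-t) + 1 - Real.exp (-t) with hvdef
    have hv : 0 < v := by
      have h1 : Real.exp (-t) < 1 := Real.exp_lt_one_iff.2 (by linarith)
      have : 0 < σ^2 * Real.exp (-t) := by positivity
      simp only [hvdef]; linarith
    have hfun : (fun x' => Real.log (pOU μ σ t x')) =
        fun x' => Real.log C + (-(x' - a * μ)^2 / (2 * v)) := by
      funext x'
      rw [hcl x', Real.log_mul (ne_of_gt hC) (Real.exp_ne_zero _), Real.log_exp]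
    rw [hfun]
    have hd : HasDerivAt (fun x' : ℝ => Real.log C + (-(x' - a * μ)^2 / (2 * v)))
        (-(2 * (x - a * μ)) / (2 * v)) x := by
      have h1 : HasDerivAt (fun x' : ℝ => x' - a * μ) 1 x :=
        (hasDerivAt_id x).sub_const _
      have h2 := (((h1.fun_pow 2).fun_neg).div_const (2 * v)).const_add (Real.log C)
      refine h2.congr_deriv ?_
      norm_num
    rw [hd.deriv]
    field_simp
    ring
  refine ⟨main, fun x => ?_⟩
  have heq : ∀ᶠ t in 𝓝[>] (0:ℝ),
      (-x + μ * Real.exp (-t / 2)) / (σ ^ 2 * Real.exp (-t) + 1 - Real.exp (-t)) =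
        deriv (fun x' => Real.log (pOU μ σ t x')) x := by
    filter_upwards [self_mem_nhdsWithin] with t ht
    exact (main t ht x).symm
  have hcont : ContinuousAt
      (fun t : ℝ => (-x + μ * Real.exp (-t / 2)) /
        (σ ^ 2 * Real.exp (-t) + 1 - Real.exp (-t))) 0 := by
    apply ContinuousAt.div
    · fun_prop
    · fun_prop
    · simp only [neg_zero, Real.exp_zero, mul_one]
      have : (0:ℝ) < σ ^ 2 := by positivity
      linarith
  have hval : (-x + μ * Real.exp (-(0:ℝ) / 2)) /
      (σ ^ 2 * Real.exp (-(0:ℝ)) + 1 - Real.exp (-(0:ℝ))) = (-x + μ) / σ ^ 2 := by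
    norm_num
  have h2 : Tendsto (fun t : ℝ => (-x + μ * Real.exp (-t / 2)) /
      (σ ^ 2 * Real.exp (-t) + 1 - Real.exp (-t))) (𝓝[>] (0:ℝ)) (𝓝 ((-x + μ) / σ ^ 2)) := by
    rw [← hval]
    exact hcont.tendsto.mono_left nhdsWithin_le_nhds
  exact h2.congr' heq
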